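/- arXiv:1801.07897 — 2 statements merged into one kernel-verified Lean document; each statement's English description precedes it below -/
import Mathlib

section
/- For every 0 ≤ s ≤ t ≤ T, the map x ↦ X_{s,t}(x) is differentiable, and its derivative is given by ∂_x X_{s,t}(x) = exp( ∫_s^t ∂_x b(u, X_{s,u}(x)) du ); in particular this derivative is strictly positive. -/
/-!
Write `φ = X_{s,·}(x)` and `ψ = X_{s,·}(y)`. The noise cancels in `ψ - φ`, which therefore solves
`(ψ - φ)' = b(u, ψ) - b(u, φ)`, and Grönwall gives `|ψ - φ| ≤ |y - x| e^{L(u - s)}`. With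
`J(u) = exp ∫_s^u ∂_x b(v, φ v) dv`, the solution of the linearised equation `J' = ∂_x b(u, φ) J`,
the defect `g = ψ - φ - (y - x) J` satisfies `g' = ∂_x b(u, φ) g + R` where, by the mean value
theorem, `|R| ≤ ε |ψ - φ|` as soon as `∂_x b` oscillates by at most `ε` on a tube around `φ`;
uniform continuity on a compact set provides such a tube of radius `O(|y - x|)`. A second Grönwall
estimate gives `|g(t)| = O(ε |y - x|)`, i.e. `X_{s,t}(y) - X_{s,t}(x) = (y - x) J(t) + o(y - x)`.
-/

open Set Filter Topology Function Real MeasureTheory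

theorem ContinuousOn.comp_graph {α β γ : Type*} [TopologicalSpace α] [TopologicalSpace β]
    [TopologicalSpace γ] {F : α → β → γ} {φ : α → β} {S : Set α}
    (hF : ContinuousOn (uncurry F) (S ×ˢ univ)) (hφ : ContinuousOn φ S) :
    ContinuousOn (fun a => F a (φ a)) S :=
  hF.comp (continuousOn_id.prodMk hφ) fun _ ha => ⟨ha, mem_univ _⟩

theorem hasDerivWithinAt_Ici_integral {k : ℝ → ℝ} {a c u : ℝ}
    (hk : ContinuousOn k (Icc a c)) (hu : u ∈ Ico a c) :
    HasDerivWithinAt (fun w => ∫ v in a..w, k v) (k u) (Ici u) u := by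
  have hIcc : Icc a c ∈ 𝓝[>] u := nhdsWithin_mono _ Ioi_subset_Ici_self <|
    mem_of_superset (Icc_mem_nhdsGE hu.2) (Icc_subset_Icc_left hu.1)
  exact intervalIntegral.integral_hasDerivWithinAt_right
    ((hk.mono (Icc_subset_Icc_right hu.2.le)).intervalIntegrable_of_Icc hu.1)
    ⟨Icc a c, hIcc, hk.aestronglyMeasurable measurableSet_Icc⟩
    ((hk u (Ico_subset_Icc_self hu)).mono_of_mem_nhdsWithin hIcc)

theorem hasDerivWithinAt_Ici_of_eq_add_integral {f k : ℝ → ℝ} {a c u : ℝ}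
    (hk : ContinuousOn k (Icc a c)) (hf : ∀ w ∈ Icc a c, f w = f a + ∫ v in a..w, k v)
    (hu : u ∈ Ico a c) : HasDerivWithinAt f (k u) (Ici u) u :=
  ((hasDerivWithinAt_Ici_integral hk hu).const_add (f a)).congr_of_eventuallyEq
    (mem_of_superset (mem_of_superset (Icc_mem_nhdsGE hu.2) (Icc_subset_Icc_left hu.1)) hf)
    (hf u (Ico_subset_Icc_self hu))

theorem gronwallBound_zero_le {K ε x : ℝ} (hK : 0 ≤ K) (hε : 0 ≤ ε) :
    gronwallBound 0 K ε x ≤ ε * x * exp (K * x) := by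
  rcases hK.eq_or_lt with rfl | hK
  · simp [gronwallBound_K0]
  have hexp : exp (K * x) - 1 ≤ K * x * exp (K * x) := by
    have h := mul_le_mul_of_nonneg_right (add_one_le_exp (-(K * x))) (exp_pos (K * x)).le
    rw [← exp_add, neg_add_cancel, exp_zero] at h
    linarith
  simp only [gronwallBound_of_K_ne_0 hK.ne', zero_mul, zero_add]
  calc ε / K * (exp (K * x) - 1) ≤ ε / K * (K * x * exp (K * x)) := by gcongr
    _ = ε * x * exp (K * x) := by field_simp

theorem abs_sub_le_mul_of_hasDerivAt {f f' : ℝ → ℝ} {L : ℝ} (hf : ∀ w, HasDerivAt f (f' w) w)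
    (hL : ∀ w, |f' w| ≤ L) (a c : ℝ) : |f a - f c| ≤ L * |a - c| := by
  simpa only [Real.norm_eq_abs] using convex_univ.norm_image_sub_le_of_norm_hasDerivWithin_le
    (fun w _ => (hf w).hasDerivWithinAt) (fun w _ => hL w) (mem_univ c) (mem_univ a)

theorem abs_sub_sub_mul_le_of_hasDerivAt {f f' : ℝ → ℝ} {a c ε : ℝ}
    (hf : ∀ w ∈ uIcc a c, HasDerivAt f (f' w) w) (hε : ∀ w ∈ uIcc a c, |f' w - f' a| ≤ ε) :
    |f c - f a - f' a * (c - a)| ≤ ε * |c - a| := by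
  have h := (convex_uIcc a c).norm_image_sub_le_of_norm_hasDerivWithin_le
    (f := fun w => f w - f' a * w) (f' := fun w => f' w - f' a)
    (fun w hw => ((hf w hw).sub ((hasDerivAt_id w).const_mul (f' a))).hasDerivWithinAt.congr_deriv
      (by ring)) hε left_mem_uIcc right_mem_uIcc
  simp only [Real.norm_eq_abs] at h
  convert h using 2
  ring

theorem exists_pos_abs_sub_le_of_continuousOn {F : ℝ → ℝ → ℝ} {φ : ℝ → ℝ} {a c ε : ℝ}
    (hF : ContinuousOn (uncurry F) (Icc a c ×ˢ univ)) (hφ : ContinuousOn φ (Icc a c))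
    (hε : 0 < ε) :
    ∃ δ > 0, ∀ u ∈ Icc a c, ∀ w, |w - φ u| ≤ δ → |F u w - F u (φ u)| ≤ ε := by
  obtain ⟨C, hC⟩ := isCompact_Icc.exists_bound_of_continuousOn hφ
  have hUC : UniformContinuousOn (uncurry F) (Icc a c ×ˢ Icc (-(C + 1)) (C + 1)) :=
    (isCompact_Icc.prod isCompact_Icc).uniformContinuousOn_of_continuous
      (hF.mono (prod_mono_right (subset_univ _)))
  obtain ⟨ρ, hρ, hUCρ⟩ := Metric.uniformContinuousOn_iff.1 hUC ε hε
  refine ⟨min (ρ / 2) 1, by positivity, fun u hu w hw => ?_⟩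
  have hφu : |φ u| ≤ C := by simpa only [Real.norm_eq_abs] using hC u hu
  have hw1 : |w - φ u| ≤ 1 := hw.trans (min_le_right _ _)
  have hwρ : |w - φ u| < ρ := hw.trans_lt ((min_le_left _ _).trans_lt (half_lt_self hρ))
  have hwC : |w| ≤ C + 1 := by linarith [abs_sub_abs_le_abs_sub w (φ u)]
  have h := hUCρ (u, w) ⟨hu, abs_le.1 hwC⟩ (u, φ u) ⟨hu, abs_le.1 (by linarith)⟩
    (by simpa [Prod.dist_eq, Real.dist_eq] using hwρ)
  rw [Real.dist_eq] at h
  exact h.le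

section Linearization

variable {b b' : ℝ → ℝ → ℝ} {φ ψ : ℝ → ℝ} {L s t d : ℝ}

theorem abs_sub_le_mul_exp_of_eq_integral (hb : ContinuousOn (uncurry b) (Icc s t ×ˢ univ))
    (hLip : ∀ u ∈ Icc s t, ∀ a c, |b u a - b u c| ≤ L * |a - c|)
    (hφ : ContinuousOn φ (Icc s t)) (hψ : ContinuousOn ψ (Icc s t))
    (heq : ∀ u ∈ Icc s t, ψ u - φ u = d + ∫ v in s..u, (b v (ψ v) - b v (φ v))) :
    ∀ u ∈ Icc s t, |ψ u - φ u| ≤ |d| * exp (L * (u - s)) := by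
  intro u hu
  have hd : ψ s - φ s = d := by
    simpa using heq s (left_mem_Icc.2 (hu.1.trans hu.2))
  have hbound : ∀ w ∈ Ico s t,
      ‖b w (ψ w) - b w (φ w)‖ ≤ L * ‖ψ w - φ w‖ + 0 := fun w hw => by
    simpa only [Real.norm_eq_abs, add_zero] using hLip w (Ico_subset_Icc_self hw) _ _
  have h := norm_le_gronwallBound_of_norm_deriv_right_le (f := fun w => ψ w - φ w) (hψ.sub hφ)
    (fun w hw => hasDerivWithinAt_Ici_of_eq_add_integral
      ((hb.comp_graph hψ).sub (hb.comp_graph hφ)) (hd ▸ heq) hw)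
    (by rw [hd, Real.norm_eq_abs]) hbound u hu
  rwa [gronwallBound_ε0, Real.norm_eq_abs] at h

theorem abs_sub_sub_mul_exp_integral_le (hst : s ≤ t)
    (hb : ContinuousOn (uncurry b) (Icc s t ×ˢ univ))
    (hderiv : ∀ u ∈ Icc s t, ∀ a, HasDerivAt (b u) (b' u a) a)
    (hb' : ContinuousOn (uncurry b') (Icc s t ×ˢ univ))
    (hbdd : ∀ u ∈ Icc s t, ∀ a, |b' u a| ≤ L)
    (hφ : ContinuousOn φ (Icc s t)) (hψ : ContinuousOn ψ (Icc s t))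
    (heq : ∀ u ∈ Icc s t, ψ u - φ u = d + ∫ v in s..u, (b v (ψ v) - b v (φ v)))
    {r ε : ℝ} (hr : |d| * exp (L * (t - s)) ≤ r)
    (hclose : ∀ u ∈ Icc s t, ∀ a, |a - φ u| ≤ r → |b' u a - b' u (φ u)| ≤ ε) :
    |ψ t - φ t - d * exp (∫ v in s..t, b' v (φ v))| ≤ ε * r * ((t - s) * exp (L * (t - s))) := by
  have hs : s ∈ Icc s t := left_mem_Icc.2 hst
  have hL : 0 ≤ L := (abs_nonneg _).trans (hbdd s hs 0)
  have hr0 : 0 ≤ r := (by positivity : 0 ≤ |d| * exp (L * (t - s))).trans hr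
  have hε : 0 ≤ ε := (abs_nonneg _).trans (hclose s hs (φ s) (by simpa using hr0))
  have hd : ψ s - φ s = d := by simpa using heq s hs
  have hΔ : ∀ u ∈ Icc s t, |ψ u - φ u| ≤ r := fun u hu =>
    (abs_sub_le_mul_exp_of_eq_integral hb
      (fun u hu => abs_sub_le_mul_of_hasDerivAt (hderiv u hu) (hbdd u hu)) hφ hψ heq u hu).trans
      (le_trans (by gcongr; exact hu.2) hr)
  have hb'φ : ContinuousOn (fun v => b' v (φ v)) (Icc s t) := hb'.comp_graph hφ
  have hI : ContinuousOn (fun u => ∫ v in s..u, b' v (φ v)) (Icc s t) := by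
    simpa only [uIcc_of_le hst] using intervalIntegral.continuousOn_primitive_interval'
      (hb'φ.intervalIntegrable_of_Icc hst) left_mem_uIcc
  have hderiv_g : ∀ u ∈ Ico s t, HasDerivWithinAt
      (fun u => ψ u - φ u - d * exp (∫ v in s..u, b' v (φ v)))
      (b u (ψ u) - b u (φ u) - d * (exp (∫ v in s..u, b' v (φ v)) * b' u (φ u))) (Ici u) u :=
    fun u hu => (hasDerivWithinAt_Ici_of_eq_add_integral (f := fun u => ψ u - φ u)
      ((hb.comp_graph hψ).sub (hb.comp_graph hφ)) (hd ▸ heq) hu).sub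
      ((hasDerivWithinAt_Ici_integral hb'φ hu).exp.const_mul d)
  have hbound : ∀ u ∈ Ico s t,
      |b u (ψ u) - b u (φ u) - d * (exp (∫ v in s..u, b' v (φ v)) * b' u (φ u))| ≤
        L * |ψ u - φ u - d * exp (∫ v in s..u, b' v (φ v))| + ε * r := by
    intro u hu
    have hu' := Ico_subset_Icc_self hu
    have hrem : |b u (ψ u) - b u (φ u) - b' u (φ u) * (ψ u - φ u)| ≤ ε * |ψ u - φ u| :=
      abs_sub_sub_mul_le_of_hasDerivAt (fun a _ => hderiv u hu' a) fun a ha =>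
        hclose u hu' a ((abs_sub_left_of_mem_uIcc ha).trans (hΔ u hu'))
    calc _ = |b' u (φ u) * (ψ u - φ u - d * exp (∫ v in s..u, b' v (φ v))) +
          (b u (ψ u) - b u (φ u) - b' u (φ u) * (ψ u - φ u))| := by ring_nf
      _ ≤ L * |ψ u - φ u - d * exp (∫ v in s..u, b' v (φ v))| + ε * r := by
        grw [abs_add_le, abs_mul, hbdd u hu' (φ u), hrem, hΔ u hu']
  have h := norm_le_gronwallBound_of_norm_deriv_right_le
    (f := fun u => ψ u - φ u - d * exp (∫ v in s..u, b' v (φ v))) (δ := 0)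
    ((hψ.sub hφ).sub (hI.rexp.const_mul d)) hderiv_g (by simp [hd])
    (by simpa only [Real.norm_eq_abs] using hbound) t (right_mem_Icc.2 hst)
  rw [Real.norm_eq_abs] at h
  calc _ ≤ _ := h
    _ ≤ _ := gronwallBound_zero_le hL (by positivity)
    _ = _ := by ring

theorem hasDerivAt_of_sub_eq_integral {Φ : ℝ → ℝ → ℝ} {x : ℝ} (hst : s ≤ t)
    (hb : ContinuousOn (uncurry b) (Icc s t ×ˢ univ))
    (hderiv : ∀ u ∈ Icc s t, ∀ a, HasDerivAt (b u) (b' u a) a)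
    (hb' : ContinuousOn (uncurry b') (Icc s t ×ˢ univ))
    (hbdd : ∀ u ∈ Icc s t, ∀ a, |b' u a| ≤ L) (hΦ : ∀ y, ContinuousOn (Φ y) (Icc s t))
    (heq : ∀ y, ∀ u ∈ Icc s t,
      Φ y u - Φ x u = y - x + ∫ v in s..u, (b v (Φ y v) - b v (Φ x v))) :
    HasDerivAt (fun y => Φ y t) (exp (∫ v in s..t, b' v (Φ x v))) x := by
  rw [hasDerivAt_iff_isLittleO, Asymptotics.isLittleO_iff]
  intro c hc
  obtain ⟨ε, hε, hεc⟩ := exists_pos_mul_lt hc ((t - s) * exp (L * (t - s)) * exp (L * (t - s)))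
  obtain ⟨δ, hδ, hclose⟩ := exists_pos_abs_sub_le_of_continuousOn hb' (hΦ x) hε
  have hnear : ∀ᶠ y in 𝓝 x, |y - x| * exp (L * (t - s)) ≤ δ := by
    filter_upwards [Metric.ball_mem_nhds x (div_pos hδ (exp_pos (L * (t - s))))] with y hy
    rw [Metric.mem_ball, Real.dist_eq, lt_div_iff₀ (exp_pos _)] at hy
    exact hy.le
  filter_upwards [hnear] with y hy
  have h := abs_sub_sub_mul_exp_integral_le hst hb hderiv hb' hbdd (hΦ x) (hΦ y) (heq y) le_rfl
    fun u hu a ha => hclose u hu a (ha.trans hy)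
  rw [smul_eq_mul, Real.norm_eq_abs, Real.norm_eq_abs]
  calc _ ≤ _ := h
    _ = (t - s) * exp (L * (t - s)) * exp (L * (t - s)) * ε * |y - x| := by ring
    _ ≤ c * |y - x| := by gcongr

end Linearization

theorem transport_flow_hasDerivAt_general (T L : ℝ)
    (b b' : ℝ → ℝ → ℝ)
    (hb : ContinuousOn (fun p : ℝ × ℝ => b p.1 p.2) (Set.Icc 0 T ×ˢ Set.univ))
    (hderiv : ∀ t ∈ Set.Icc (0 : ℝ) T, ∀ x : ℝ, HasDerivAt (fun y => b t y) (b' t x) x)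
    (hb'c : ContinuousOn (fun p : ℝ × ℝ => b' p.1 p.2) (Set.Icc 0 T ×ˢ Set.univ))
    (hb'bdd : ∀ t ∈ Set.Icc (0 : ℝ) T, ∀ x : ℝ, |b' t x| ≤ L)
    (z : ℝ → ℝ)
    (X : ℝ → ℝ → ℝ → ℝ)
    (hXcont : ∀ s ∈ Set.Icc (0 : ℝ) T, ∀ x : ℝ,
      ContinuousOn (fun t => X s t x) (Set.Icc s T))
    (hXeq : ∀ s ∈ Set.Icc (0 : ℝ) T, ∀ x : ℝ, ∀ t ∈ Set.Icc s T,
      X s t x = x + (∫ u in s..t, b u (X s u x)) + z t - z s) :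
    ∀ s t : ℝ, 0 ≤ s → s ≤ t → t ≤ T → ∀ x : ℝ,
      HasDerivAt (fun y => X s t y) (Real.exp (∫ u in s..t, b' u (X s u x))) x ∧
      0 < Real.exp (∫ u in s..t, b' u (X s u x)) := by
  intro s t hs hst htT x
  have hsub : Icc s t ⊆ Icc 0 T := Icc_subset_Icc hs htT
  have hs0T : s ∈ Icc 0 T := ⟨hs, hst.trans htT⟩
  have hb_st : ContinuousOn (uncurry b) (Icc s t ×ˢ univ) := hb.mono (prod_mono hsub subset_rfl)
  have hX : ∀ y, ContinuousOn (fun u => X s u y) (Icc s t) := fun y =>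
    (hXcont s hs0T y).mono (Icc_subset_Icc_right htT)
  have hXsub : ∀ y, ∀ u ∈ Icc s t,
      X s u y - X s u x = y - x + ∫ v in s..u, (b v (X s v y) - b v (X s v x)) := by
    intro y u hu
    have hint : ∀ w, IntervalIntegrable (fun v => b v (X s v w)) volume s u := fun w =>
      ((hb_st.comp_graph (hX w)).mono (Icc_subset_Icc_right hu.2)).intervalIntegrable_of_Icc hu.1
    rw [hXeq s hs0T y u ⟨hu.1, hu.2.trans htT⟩, hXeq s hs0T x u ⟨hu.1, hu.2.trans htT⟩,
      intervalIntegral.integral_sub (hint y) (hint x)]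
    ring
  exact ⟨hasDerivAt_of_sub_eq_integral (Φ := fun y u => X s u y) hst hb_st
    (fun u hu => hderiv u (hsub hu)) (hb'c.mono (prod_mono hsub subset_rfl))
    (fun u hu => hb'bdd u (hsub hu)) hX hXsub, exp_pos _⟩

/-- For 0 ≤ s ≤ t ≤ T, the forward flow x ↦ X_{s,t}(x) is differentiable
with derivative ∂_x X_{s,t}(x) = exp(∫_s^t ∂_x b(u, X_{s,u}(x)) du) > 0. -/
theorem transport_flow_hasDerivAt (T L : ℝ) (hT : 0 < T)
    (b b' : ℝ → ℝ → ℝ)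
    (hb : ContinuousOn (fun p : ℝ × ℝ => b p.1 p.2) (Set.Icc 0 T ×ˢ Set.univ))
    (hderiv : ∀ t ∈ Set.Icc (0 : ℝ) T, ∀ x : ℝ, HasDerivAt (fun y => b t y) (b' t x) x)
    (hb'c : ContinuousOn (fun p : ℝ × ℝ => b' p.1 p.2) (Set.Icc 0 T ×ˢ Set.univ))
    (hb'bdd : ∀ t ∈ Set.Icc (0 : ℝ) T, ∀ x : ℝ, |b' t x| ≤ L)
    (z : ℝ → ℝ) (hz : ContinuousOn z (Set.Icc 0 T))
    (X : ℝ → ℝ → ℝ → ℝ)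
    (hXcont : ∀ s ∈ Set.Icc (0 : ℝ) T, ∀ x : ℝ,
      ContinuousOn (fun t => X s t x) (Set.Icc s T))
    (hXeq : ∀ s ∈ Set.Icc (0 : ℝ) T, ∀ x : ℝ, ∀ t ∈ Set.Icc s T,
      X s t x = x + (∫ u in s..t, b u (X s u x)) + z t - z s) :
    ∀ s t : ℝ, 0 ≤ s → s ≤ t → t ≤ T → ∀ x : ℝ,
      HasDerivAt (fun y => X s t y) (Real.exp (∫ u in s..t, b' u (X s u x))) x ∧
      0 < Real.exp (∫ u in s..t, b' u (X s u x)) :=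
  transport_flow_hasDerivAt_general T L b b' hb hderiv hb'c hb'bdd z X hXcont hXeq
end

section
/- Let T > 0, let b : [0,T] × ℝ → ℝ be continuous with continuous bounded spatial derivative ∂_x b, let z : [0,T] → ℝ be continuously differentiable, and let u₀ : ℝ → ℝ be continuously differentiable. For t ∈ [0,T] let Y_{0,t} := (X_{0,t})^{−1} be the inverse of the forward flow, and define u(t,x) := u₀(Y_{0,t}(x)). Then u is differentiable in t and x on [0,T] × ℝ and satisfies the transport equation ∂_t u(t,x) + ( b(t,x) + z'(t) ) ∂_x u(t,x) = 0 with initial condition u(0,x) = u₀(x) for all x ∈ ℝ. -/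
/-!
For two starting points the difference `w = X_{0,·} p - X_{0,·} q` solves the linear equation
`w' = c w`, where `c u = dslope (b u) (X_{0,u} q) (X_{0,u} p)` is the difference quotient of
`b u`, extended by `∂ₓb` on the diagonal; hence `X_{0,τ} p - X_{0,τ} q = (p - q) exp ∫₀^τ c`,
with `|c| ≤ L`. Inverting this identity at `q = Y_{0,t} x` gives
`Y_{0,τ} x' - Y_{0,t} x = (x' - X_{0,τ}(Y_{0,t} x)) E(τ, x')`, where `E = exp (-∫₀^τ c)` is
bounded. So `Y` is continuous at `(t, x)`, and then, by dominated convergence,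
`E(τ, x') → exp (-∫₀ᵗ ∂ₓb(u, X_{0,u}(Y_{0,t} x)) du)`. The first factor vanishes at `(t, x)`
with derivatives `1` in `x'` and `-(b t x + z' t)` in `τ`, which yields both derivatives of `Y`,
and the transport equation follows from the chain rule.
-/

open Set Filter Topology MeasureTheory intervalIntegral Interval

theorem hasDerivWithinAt_integral_Icc {a b t : ℝ} {f : ℝ → ℝ} (hf : ContinuousOn f (Icc a b))
    (ht : t ∈ Icc a b) :
    HasDerivWithinAt (fun τ => ∫ u in a..τ, f u) (f t) (Icc a b) t := by
  have : Fact (t ∈ Icc a b) := ⟨ht⟩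
  exact integral_hasDerivWithinAt_right
    (hf.mono (uIcc_subset_Icc ⟨le_rfl, ht.1.trans ht.2⟩ ht)).intervalIntegrable
    (hf.stronglyMeasurableAtFilter_nhdsWithin measurableSet_Icc t) (hf t ht)

theorem eq_mul_exp_integral_of_hasDerivWithinAt {a b : ℝ} {w c : ℝ → ℝ}
    (hc : ContinuousOn c (Icc a b))
    (hw : ∀ t ∈ Icc a b, HasDerivWithinAt w (c t * w t) (Icc a b) t) :
    ∀ t ∈ Icc a b, w t = w a * Real.exp (∫ u in a..t, c u) := by
  set h := fun t => w t * Real.exp (-∫ u in a..t, c u)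
  have hh : ∀ t ∈ Icc a b, HasDerivWithinAt h 0 (Icc a b) t := fun t ht =>
    ((hw t ht).mul (hasDerivWithinAt_integral_Icc hc ht).neg.exp).congr_deriv (by ring)
  have hconst : ∀ t ∈ Icc a b, h t = h a :=
    constant_of_has_deriv_right_zero (fun t ht => (hh t ht).continuousWithinAt)
      fun t ht => (hh t (Ico_subset_Icc_self ht)).mono_of_mem_nhdsWithin (Icc_mem_nhdsGE_of_mem ht)
  intro t ht
  have := hconst t ht
  simp only [h, integral_same, neg_zero, Real.exp_zero, mul_one] at this
  rw [← this, mul_assoc, ← Real.exp_add, neg_add_cancel, Real.exp_zero, mul_one]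

theorem Filter.Tendsto.mul_exp_of_abs_le {ι : Type*} {l : Filter ι} {f g : ι → ℝ} {C : ℝ}
    (hf : Tendsto f l (𝓝 0)) (hg : ∀ᶠ i in l, |g i| ≤ C) :
    Tendsto (fun i => f i * Real.exp (g i)) l (𝓝 0) :=
  hf.zero_mul_isBoundedUnder_le <| isBoundedUnder_of_eventually_le (a := Real.exp C) <|
    hg.mono fun i hi => by
      rw [Function.comp_apply, Real.norm_eq_abs, Real.abs_exp]
      exact Real.exp_le_exp.2 ((le_abs_self _).trans hi)

theorem abs_dslope_le {f f' : ℝ → ℝ} {C : ℝ} (hf : ∀ x, HasDerivAt f (f' x) x)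
    (hC : ∀ x, |f' x| ≤ C) (a c : ℝ) : |dslope f a c| ≤ C := by
  rcases eq_or_ne c a with rfl | hca
  · rw [dslope_same, (hf c).deriv]
    exact hC c
  · have hlip := convex_univ.norm_image_sub_le_of_norm_hasDerivWithin_le
      (fun x _ => (hf x).hasDerivWithinAt) (fun x _ => hC x) (mem_univ a) (mem_univ c)
    rw [dslope_of_ne f hca, slope_def_field, abs_div]
    exact div_le_of_le_mul₀ (abs_nonneg _) ((abs_nonneg _).trans (hC a)) hlip

theorem HasDerivWithinAt.mul_tendsto_of_eq_zero {f h : ℝ → ℝ} {f' c : ℝ} {s : Set ℝ}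
    {t : ℝ} (hf : HasDerivWithinAt f f' s t) (hft : f t = 0) (hh : Tendsto h (𝓝[s] t) (𝓝 c)) :
    HasDerivWithinAt (fun τ => f τ * h τ) (f' * c) s t := by
  rw [hasDerivWithinAt_iff_tendsto_slope] at hf ⊢
  refine (hf.mul (hh.mono_left (nhdsWithin_mono t sdiff_subset))).congr fun τ => ?_
  simp only [slope_def_field, hft, sub_zero, zero_mul]
  ring

theorem tendsto_intervalIntegral_of_dominated_of_tendsto_upper {ι : Type*} {l : Filter ι}
    [l.IsCountablyGenerated] {a b t C : ℝ} {σ : ι → ℝ} {F : ι → ℝ → ℝ} {G : ℝ → ℝ}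
    (hσ : Tendsto σ l (𝓝[Icc a b] t)) (ht : t ∈ Icc a b)
    (hF : ∀ i, ContinuousOn (F i) (Icc a b)) (hFC : ∀ i, ∀ u ∈ Icc a b, |F i u| ≤ C)
    (hFG : ∀ u ∈ Icc a b, Tendsto (fun i => F i u) l (𝓝 (G u))) :
    Tendsto (fun i => ∫ u in a..σ i, F i u) l (𝓝 (∫ u in a..t, G u)) := by
  have hσab : ∀ᶠ i in l, σ i ∈ Icc a b := tendsto_nhdsWithin_iff.1 hσ |>.2
  have hΙ : Ι a t ⊆ Icc a b := by
    rw [uIoc_of_le ht.1]; exact Ioc_subset_Icc_self.trans (Icc_subset_Icc le_rfl ht.2)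
  have hint : ∀ i, ∀ c ∈ Icc a b, ∀ d ∈ Icc a b, IntervalIntegrable (F i) volume c d :=
    fun i c hc d hd => ((hF i).mono (uIcc_subset_Icc hc hd)).intervalIntegrable
  have hmain : Tendsto (fun i => ∫ u in a..t, F i u) l (𝓝 (∫ u in a..t, G u)) :=
    tendsto_integral_filter_of_dominated_convergence (fun _ => C)
      (Eventually.of_forall fun i => ((hF i).mono hΙ).aestronglyMeasurable measurableSet_uIoc)
      (Eventually.of_forall fun i => ae_of_all _ fun u hu => hFC i u (hΙ hu))
      intervalIntegrable_const (ae_of_all _ fun u hu => hFG u (hΙ hu))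
  have htail : Tendsto (fun i => ∫ u in t..σ i, F i u) l (𝓝 0) := by
    have hσt : Tendsto (fun i => C * |σ i - t|) l (𝓝 0) := by
      simpa using ((tendsto_nhdsWithin_iff.1 hσ).1.sub_const t).abs.const_mul C
    refine squeeze_zero_norm' ?_ hσt
    filter_upwards [hσab] with i hi
    refine norm_integral_le_of_norm_le_const fun u hu => hFC i u ?_
    exact uIcc_subset_Icc ht hi (uIoc_subset_uIcc hu)
  rw [← add_zero (∫ u in a..t, G u)]
  refine (hmain.add htail).congr' ?_
  filter_upwards [hσab] with i hi
  exact integral_add_adjacent_intervals (hint i a ⟨le_rfl, ht.1.trans ht.2⟩ t ht) (hint i t ht _ hi)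

theorem ContinuousOn.comp_graph_s14 {s : Set ℝ} {f : ℝ → ℝ → ℝ} {γ : ℝ → ℝ}
    (hf : ContinuousOn (fun p : ℝ × ℝ => f p.1 p.2) (s ×ˢ univ)) (hγ : ContinuousOn γ s) :
    ContinuousOn (fun u => f u (γ u)) s :=
  hf.comp (continuousOn_id.prodMk hγ) fun _ hu => ⟨hu, mem_univ _⟩

structure IsRegularDrift (T L : ℝ) (b b' : ℝ → ℝ → ℝ) : Prop where
  continuousOn : ContinuousOn (fun p : ℝ × ℝ => b p.1 p.2) (Icc 0 T ×ˢ univ)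
  hasDerivAt : ∀ t ∈ Icc (0 : ℝ) T, ∀ x : ℝ, HasDerivAt (fun y => b t y) (b' t x) x
  continuousOn_deriv : ContinuousOn (fun p : ℝ × ℝ => b' p.1 p.2) (Icc 0 T ×ˢ univ)
  abs_deriv_le : ∀ t ∈ Icc (0 : ℝ) T, ∀ x : ℝ, |b' t x| ≤ L

structure IsFlow (T : ℝ) (b : ℝ → ℝ → ℝ) (z : ℝ → ℝ) (φ : ℝ → ℝ → ℝ) : Prop where
  continuousOn : ∀ x, ContinuousOn (fun t => φ t x) (Icc 0 T)
  eq_integral : ∀ x, ∀ t ∈ Icc (0 : ℝ) T, φ t x = x + (∫ u in (0 : ℝ)..t, b u (φ u x)) + z t - z 0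
  injective : ∀ t ∈ Icc (0 : ℝ) T, Function.Injective (φ t)

variable {T L : ℝ} {b b' : ℝ → ℝ → ℝ} {z : ℝ → ℝ} {φ ψ : ℝ → ℝ → ℝ}

namespace IsRegularDrift

theorem abs_integral_dslope_le (hb : IsRegularDrift T L b b') (γ₁ γ₂ : ℝ → ℝ) {τ : ℝ}
    (hτ : τ ∈ Icc 0 T) : |∫ u in (0 : ℝ)..τ, dslope (b u) (γ₁ u) (γ₂ u)| ≤ L * T := by
  have hL : 0 ≤ L := (abs_nonneg _).trans (hb.abs_deriv_le τ hτ 0)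
  have hsub : Ι 0 τ ⊆ Icc 0 T :=
    uIoc_subset_uIcc.trans (uIcc_subset_Icc ⟨le_rfl, hτ.1.trans hτ.2⟩ hτ)
  calc |∫ u in (0 : ℝ)..τ, dslope (b u) (γ₁ u) (γ₂ u)| ≤ L * |τ - 0| := by
        rw [← Real.norm_eq_abs]
        exact intervalIntegral.norm_integral_le_of_norm_le_const fun u hu =>
          abs_dslope_le (hb.hasDerivAt u (hsub hu)) (hb.abs_deriv_le u (hsub hu)) _ _
    _ ≤ L * T := by rw [sub_zero, abs_of_nonneg hτ.1]; exact mul_le_mul_of_nonneg_left hτ.2 hL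

end IsRegularDrift

namespace IsFlow

theorem zero_apply (hφ : IsFlow T b z φ) (hT : 0 ≤ T) (x : ℝ) : φ 0 x = x := by
  simpa using hφ.eq_integral x 0 ⟨le_rfl, hT⟩

theorem hasDerivWithinAt_sub_path (hφ : IsFlow T b z φ)
    (hb : ContinuousOn (fun p : ℝ × ℝ => b p.1 p.2) (Icc 0 T ×ˢ univ)) (x : ℝ)
    {t : ℝ} (ht : t ∈ Icc 0 T) :
    HasDerivWithinAt (fun τ => φ τ x - z τ) (b t (φ t x)) (Icc 0 T) t := by
  have hF := (hasDerivWithinAt_integral_Icc (hb.comp_graph_s14 (hφ.continuousOn x)) ht).const_add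
    (x - z 0)
  refine hF.congr (fun τ hτ => ?_) ?_
  · rw [hφ.eq_integral x τ hτ]
    ring
  · rw [hφ.eq_integral x t ht]
    ring

theorem continuousOn_dslope (hφ : IsFlow T b z φ) (hb : IsRegularDrift T L b b') (p q : ℝ) :
    ContinuousOn (fun u => dslope (b u) (φ u q) (φ u p)) (Icc 0 T) := by
  rcases eq_or_ne p q with rfl | hpq
  · refine (hb.continuousOn_deriv.comp_graph_s14 (hφ.continuousOn p)).congr fun u hu => ?_
    simp [dslope_same, (hb.hasDerivAt u hu (φ u p)).deriv]
  · have hne : ∀ u ∈ Icc 0 T, φ u p ≠ φ u q := fun u hu h => hpq (hφ.injective u hu h)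
    refine (((hb.continuousOn.comp_graph_s14 (hφ.continuousOn p)).sub
      (hb.continuousOn.comp_graph_s14 (hφ.continuousOn q))).div
      ((hφ.continuousOn p).sub (hφ.continuousOn q)) fun u hu => sub_ne_zero.2 (hne u hu)).congr
      fun u hu => ?_
    simp [dslope_of_ne _ (hne u hu), slope_def_field]

theorem sub_eq_mul_exp (hφ : IsFlow T b z φ) (hb : IsRegularDrift T L b b') (p q : ℝ) {τ : ℝ}
    (hτ : τ ∈ Icc 0 T) :
    φ τ p - φ τ q = (p - q) * Real.exp (∫ u in (0 : ℝ)..τ, dslope (b u) (φ u q) (φ u p)) := by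
  have hT : 0 ≤ T := hτ.1.trans hτ.2
  have hw : ∀ t ∈ Icc 0 T, HasDerivWithinAt (fun τ => φ τ p - φ τ q)
      (dslope (b t) (φ t q) (φ t p) * (φ t p - φ t q)) (Icc 0 T) t := fun t ht => by
    have := (hφ.hasDerivWithinAt_sub_path hb.continuousOn p ht).sub
      (hφ.hasDerivWithinAt_sub_path hb.continuousOn q ht)
    rw [mul_comm, ← smul_eq_mul, sub_smul_dslope]
    exact this.congr_of_mem (fun τ _ => by simp only [Pi.sub_apply]; ring) ht
  have := eq_mul_exp_integral_of_hasDerivWithinAt (hφ.continuousOn_dslope hb p q) hw τ hτ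
  rwa [hφ.zero_apply hT, hφ.zero_apply hT] at this

theorem continuous_apply (hφ : IsFlow T b z φ) (hb : IsRegularDrift T L b b') {τ : ℝ}
    (hτ : τ ∈ Icc 0 T) : Continuous (φ τ) := by
  refine continuous_iff_continuousAt.2 fun q => ?_
  have h := ((tendsto_sub_nhds_zero_iff.2 (tendsto_id (x := 𝓝 q))).mul_exp_of_abs_le
    (Eventually.of_forall fun p => hb.abs_integral_dslope_le (fun u => φ u q) (fun u => φ u p) hτ)
    ).const_add (φ τ q)
  rw [add_zero] at h
  refine h.congr fun p => ?_
  rw [id_eq, ← hφ.sub_eq_mul_exp hb p q hτ]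
  ring

theorem tendsto_dslope (hφ : IsFlow T b z φ) (hb : IsRegularDrift T L b b') {u : ℝ}
    (hu : u ∈ Icc 0 T) (q : ℝ) :
    Tendsto (fun p => dslope (b u) (φ u q) (φ u p)) (𝓝 q) (𝓝 (b' u (φ u q))) := by
  have h := (continuousAt_dslope_same.2 (hb.hasDerivAt u hu (φ u q)).differentiableAt).tendsto.comp
    ((hφ.continuous_apply hb hu).tendsto q)
  rwa [dslope_same, (hb.hasDerivAt u hu _).deriv] at h

theorem tendsto_integral_dslope (hφ : IsFlow T b z φ) (hb : IsRegularDrift T L b b')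
    {ι : Type*} {l : Filter ι} [l.IsCountablyGenerated] {σ ξ : ι → ℝ} {t q : ℝ}
    (hσ : Tendsto σ l (𝓝[Icc 0 T] t)) (ht : t ∈ Icc 0 T) (hξ : Tendsto ξ l (𝓝 q)) :
    Tendsto (fun i => ∫ u in (0 : ℝ)..σ i, dslope (b u) (φ u q) (φ u (ξ i))) l
      (𝓝 (∫ u in (0 : ℝ)..t, b' u (φ u q))) :=
  tendsto_intervalIntegral_of_dominated_of_tendsto_upper hσ ht
    (fun i => hφ.continuousOn_dslope hb (ξ i) q)
    (fun _ u hu => abs_dslope_le (hb.hasDerivAt u hu) (hb.abs_deriv_le u hu) _ _)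
    (fun _ hu => (hφ.tendsto_dslope hb hu q).comp hξ)

theorem inverse_sub_eq (hφ : IsFlow T b z φ) (hb : IsRegularDrift T L b b')
    (hψ : ∀ t ∈ Icc (0 : ℝ) T, ∀ x, φ t (ψ t x) = x) (q x : ℝ) {τ : ℝ} (hτ : τ ∈ Icc 0 T) :
    ψ τ x - q =
      (x - φ τ q) * Real.exp (-∫ u in (0 : ℝ)..τ, dslope (b u) (φ u q) (φ u (ψ τ x))) := by
  have h := hφ.sub_eq_mul_exp hb (ψ τ x) q hτ
  rw [hψ τ hτ x] at h
  rw [h, mul_assoc, ← Real.exp_add, add_neg_cancel, Real.exp_zero, mul_one]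

theorem tendsto_inverse_weight (hφ : IsFlow T b z φ) (hb : IsRegularDrift T L b b')
    (hψ : ∀ t ∈ Icc (0 : ℝ) T, ∀ x, φ t (ψ t x) = x) {t : ℝ} (ht : t ∈ Icc 0 T) (x : ℝ) :
    Tendsto (fun i : ℝ × ℝ =>
        Real.exp (-∫ u in (0 : ℝ)..i.1, dslope (b u) (φ u (ψ t x)) (φ u (ψ i.1 i.2))))
      (𝓝[Icc 0 T ×ˢ univ] (t, x)) (𝓝 (Real.exp (-∫ u in (0 : ℝ)..t, b' u (φ u (ψ t x))))) := by
  set q := ψ t x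
  have hfst : Tendsto Prod.fst (𝓝[Icc 0 T ×ˢ univ] (t, x)) (𝓝[Icc 0 T] t) :=
    continuous_fst.continuousWithinAt.tendsto_nhdsWithin fun _ hi => hi.1
  have hsnd : Tendsto Prod.snd (𝓝[Icc 0 T ×ˢ univ] (t, x)) (𝓝 x) :=
    continuous_snd.continuousWithinAt.tendsto
  have hmem : ∀ᶠ i in 𝓝[Icc 0 T ×ˢ univ] (t, x), i.1 ∈ Icc 0 T :=
    eventually_mem_nhdsWithin.mono fun _ hi => hi.1
  have hdefect : Tendsto (fun i : ℝ × ℝ => i.2 - φ i.1 q) (𝓝[Icc 0 T ×ˢ univ] (t, x)) (𝓝 0) := by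
    simpa [q, hψ t ht x] using hsnd.sub (((hφ.continuousOn q) t ht).tendsto.comp hfst)
  have hψq : Tendsto (fun i : ℝ × ℝ => ψ i.1 i.2) (𝓝[Icc 0 T ×ˢ univ] (t, x)) (𝓝 q) := by
    have h := (hdefect.mul_exp_of_abs_le (hmem.mono fun i hi => (abs_neg _).trans_le
      (hb.abs_integral_dslope_le (fun u => φ u q) (fun u => φ u (ψ i.1 i.2)) hi))).const_add q
    rw [add_zero] at h
    refine h.congr' (hmem.mono fun i hi => ?_)
    rw [← hφ.inverse_sub_eq hb hψ q i.2 hi]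
    ring
  exact (Real.continuous_exp.tendsto _).comp (hφ.tendsto_integral_dslope hb hfst ht hψq).neg

theorem hasDerivAt_inverse (hφ : IsFlow T b z φ) (hb : IsRegularDrift T L b b')
    (hψ : ∀ t ∈ Icc (0 : ℝ) T, ∀ x, φ t (ψ t x) = x) {t : ℝ} (ht : t ∈ Icc 0 T) (x : ℝ) :
    HasDerivAt (ψ t) (Real.exp (-∫ u in (0 : ℝ)..t, b' u (φ u (ψ t x)))) x := by
  have hpair : Tendsto (fun y => (t, y)) (𝓝[univ] x) (𝓝[Icc 0 T ×ˢ univ] (t, x)) :=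
    (Continuous.prodMk_right t).continuousWithinAt.tendsto_nhdsWithin fun _ _ => ⟨ht, mem_univ _⟩
  have h := (((hasDerivAt_id x).sub_const x).hasDerivWithinAt.mul_tendsto_of_eq_zero (sub_self x)
    ((hφ.tendsto_inverse_weight hb hψ ht x).comp hpair)).const_add (ψ t x)
  rw [one_mul, hasDerivWithinAt_univ] at h
  refine h.congr_of_eventuallyEq (Eventually.of_forall fun y => ?_)
  have := hφ.inverse_sub_eq hb hψ (ψ t x) y ht
  rw [hψ t ht x] at this
  simp only [Function.comp_apply, id_eq, ← this]
  ring

theorem hasDerivWithinAt_inverse_time (hφ : IsFlow T b z φ) (hb : IsRegularDrift T L b b')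
    (hψ : ∀ t ∈ Icc (0 : ℝ) T, ∀ x, φ t (ψ t x) = x) {t : ℝ} (ht : t ∈ Icc 0 T)
    (hz : DifferentiableAt ℝ z t) (x : ℝ) :
    HasDerivWithinAt (fun τ => ψ τ x)
      (-(b t x + deriv z t) * Real.exp (-∫ u in (0 : ℝ)..t, b' u (φ u (ψ t x)))) (Icc 0 T) t := by
  have hq : φ t (ψ t x) = x := hψ t ht x
  have hγ : HasDerivWithinAt (fun τ => x - φ τ (ψ t x)) (-(b t x + deriv z t)) (Icc 0 T) t := by
    have h := ((hφ.hasDerivWithinAt_sub_path hb.continuousOn (ψ t x) ht).add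
      hz.hasDerivAt.hasDerivWithinAt).const_sub x
    rw [hq] at h
    exact h.congr (fun τ _ => by simp) (by simp)
  have hpair : Tendsto (fun τ => (τ, x)) (𝓝[Icc 0 T] t) (𝓝[Icc 0 T ×ˢ univ] (t, x)) :=
    (Continuous.prodMk_left x).continuousWithinAt.tendsto_nhdsWithin fun _ hτ => ⟨hτ, mem_univ _⟩
  have h := (hγ.mul_tendsto_of_eq_zero (by rw [hq, sub_self])
    ((hφ.tendsto_inverse_weight hb hψ ht x).comp hpair)).const_add (ψ t x)
  refine h.congr (fun τ hτ => ?_) ?_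
  · rw [Function.comp_apply, ← hφ.inverse_sub_eq hb hψ (ψ t x) x hτ]
    ring
  · rw [hq, sub_self, zero_mul, add_zero]

end IsFlow

/-- Representation of the solution of the transport equation. For a smooth
noise path `z`, with `Y_{0,t} = (X_{0,t})⁻¹` the inverse of the forward flow, the function
`u(t,x) := u₀(Y_{0,t}(x))` is differentiable in `t` and `x` on `[0,T] × ℝ`, satisfies
`∂_t u(t,x) + (b(t,x) + z'(t)) ∂_x u(t,x) = 0`, and `u(0,x) = u₀(x)`. -/
theorem transport_equation_representation (T L : ℝ) (hT : 0 < T)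
    (b b' : ℝ → ℝ → ℝ)
    (hb : ContinuousOn (fun p : ℝ × ℝ => b p.1 p.2) (Set.Icc 0 T ×ˢ Set.univ))
    (hderiv : ∀ t ∈ Set.Icc (0 : ℝ) T, ∀ x : ℝ, HasDerivAt (fun y => b t y) (b' t x) x)
    (hb'c : ContinuousOn (fun p : ℝ × ℝ => b' p.1 p.2) (Set.Icc 0 T ×ˢ Set.univ))
    (hb'bdd : ∀ t ∈ Set.Icc (0 : ℝ) T, ∀ x : ℝ, |b' t x| ≤ L)
    (z : ℝ → ℝ) (hz : ContDiff ℝ 1 z)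
    (u₀ : ℝ → ℝ) (hu₀ : ContDiff ℝ 1 u₀)
    (X : ℝ → ℝ → ℝ → ℝ)
    (hXcont : ∀ s ∈ Set.Icc (0 : ℝ) T, ∀ x : ℝ,
      ContinuousOn (fun t => X s t x) (Set.Icc s T))
    (hXeq : ∀ s ∈ Set.Icc (0 : ℝ) T, ∀ x : ℝ, ∀ t ∈ Set.Icc s T,
      X s t x = x + (∫ u in s..t, b u (X s u x)) + z t - z s)
    (Y : ℝ → ℝ → ℝ)
    (hY : ∀ t ∈ Set.Icc (0 : ℝ) T, ∀ x : ℝ,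
      X 0 t (Y t x) = x ∧ Y t (X 0 t x) = x) :
    (∀ t ∈ Set.Icc (0 : ℝ) T, ∀ x : ℝ, ∃ ut ux : ℝ,
      HasDerivWithinAt (fun τ => u₀ (Y τ x)) ut (Set.Icc 0 T) t ∧
      HasDerivAt (fun y => u₀ (Y t y)) ux x ∧
      ut + (b t x + deriv z t) * ux = 0) ∧
    ∀ x : ℝ, u₀ (Y 0 x) = u₀ x := by
  have h0 : (0 : ℝ) ∈ Icc 0 T := ⟨le_rfl, hT.le⟩
  have hdrift : IsRegularDrift T L b b' := ⟨hb, hderiv, hb'c, hb'bdd⟩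
  have hflow : IsFlow T b z (X 0) :=
    ⟨hXcont 0 h0, hXeq 0 h0, fun t ht => Function.LeftInverse.injective fun x => (hY t ht x).2⟩
  have hinv : ∀ t ∈ Icc (0 : ℝ) T, ∀ x, X 0 t (Y t x) = x := fun t ht x => (hY t ht x).1
  have hu₀' : ∀ y, HasDerivAt u₀ (deriv u₀ y) y :=
    fun y => (hu₀.differentiable one_ne_zero y).hasDerivAt
  refine ⟨fun t ht x => ⟨_, _, (hu₀' _).comp_hasDerivWithinAt t
    (hflow.hasDerivWithinAt_inverse_time hdrift hinv ht (hz.differentiable one_ne_zero t) x),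
    (hu₀' _).comp x (hflow.hasDerivAt_inverse hdrift hinv ht x), by ring⟩, fun x => ?_⟩
  rw [← hflow.zero_apply hT.le (Y 0 x), hinv 0 h0 x]
end
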